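/- There exists a constant C > 0 such that for every real μ ≥ 1/2 and every real r ≥ 1, one has K_μ(r) ≤ C · e^{-r/2} r^{-μ} · 2^{2μ} Γ(μ). -/

import Mathlib

open Real

/-- The modified Bessel function of the second kind, via the integral representation
`K_μ(r) = (π^{1/2} 2^{-μ} r^{μ} / Γ(μ + 1/2)) · ∫_{1}^{∞} e^{-rt} (t² - 1)^{μ - 1/2} dt`. -/
noncomputable def besselK (μ r : ℝ) : ℝ :=
  (Real.sqrt π * 2 ^ (-μ) * r ^ μ / Real.Gamma (μ + 1 / 2)) *
    ∫ t in Set.Ioi (1 : ℝ), Real.exp (-r * t) * (t ^ 2 - 1) ^ (μ - 1 / 2)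

/-!
For `t ≥ 1` we have `t² - 1 ≤ 2 (t - 1/2)²` and `e^{-rt} = e^{-r/2} e^{-r(t - 1/2)}`, so after the
substitution `u = t - 1/2` the integral in `K_μ(r)` is at most `e^{-r/2} 2^{μ - 1/2}` times the
Gamma integral `∫₀^∞ u^{2μ-1} e^{-ru} du = r^{-2μ} Γ(2μ)`. Legendre's duplication formula
`Γ(2μ) = 2^{2μ-1} Γ(μ) Γ(μ + 1/2) / √π` cancels `Γ(μ + 1/2)` and `√π`, giving the bound with
`C = 2^{-3/2}`.
-/

open MeasureTheory Set

theorem setIntegral_Ioi_comp_sub_right {E : Type*} [NormedAddCommGroup E] [NormedSpace ℝ E]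
    (f : ℝ → E) (a c : ℝ) : ∫ t in Ioi a, f (t - c) = ∫ u in Ioi (a - c), f u := by
  rw [← (measurePreserving_sub_right volume c).setIntegral_preimage_emb
    (measurableEmbedding_subRight c) f]
  simp

theorem IntegrableOn.comp_sub_right_Ioi {E : Type*} [NormedAddCommGroup E] {f : ℝ → E} {a : ℝ}
    (c : ℝ) (hf : IntegrableOn f (Ioi (a - c))) : IntegrableOn (fun t => f (t - c)) (Ioi a) := by
  simpa [Function.comp_def] using ((measurePreserving_sub_right volume c).integrableOn_comp_preimage
    (measurableEmbedding_subRight c)).mpr hf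

theorem integrableOn_rpow_mul_exp_neg_mul_Ioi {s r : ℝ} (hs : 0 < s) (hr : 0 < r) :
    IntegrableOn (fun u : ℝ => u ^ (s - 1) * exp (-(r * u))) (Ioi 0) := by
  simpa [neg_mul] using integrableOn_rpow_mul_exp_neg_mul_rpow (by linarith) one_pos hr

theorem setIntegral_Ioi_rpow_mul_exp_neg_mul_le {s r a : ℝ} (hs : 0 < s) (hr : 0 < r)
    (ha : 0 ≤ a) : ∫ u in Ioi a, u ^ (s - 1) * exp (-(r * u)) ≤ (1 / r) ^ s * Gamma s := by
  rw [← integral_rpow_mul_exp_neg_mul_Ioi hs hr]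
  refine setIntegral_mono_set (integrableOn_rpow_mul_exp_neg_mul_Ioi hs hr) ?_
    (Ioi_subset_Ioi ha).eventuallyLE
  filter_upwards [self_mem_ae_restrict measurableSet_Ioi] with u (hu : 0 < u)
  positivity

theorem sq_sub_one_le_two_mul_sq_sub_half (t : ℝ) : t ^ 2 - 1 ≤ 2 * (t - 1 / 2) ^ 2 := by
  nlinarith [sq_nonneg (t - 1)]

theorem exp_neg_mul_mul_sq_sub_one_rpow_le {μ r t : ℝ} (hμ : 1 / 2 ≤ μ) (ht : 1 ≤ t) :
    exp (-r * t) * (t ^ 2 - 1) ^ (μ - 1 / 2) ≤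
      exp (-r / 2) * 2 ^ (μ - 1 / 2) * ((t - 1 / 2) ^ (2 * μ - 1) * exp (-(r * (t - 1 / 2)))) := by
  have hexp : exp (-r * t) = exp (-r / 2) * exp (-(r * (t - 1 / 2))) := by
    rw [← exp_add]; ring_nf
  have hpow : (t ^ 2 - 1) ^ (μ - 1 / 2) ≤ 2 ^ (μ - 1 / 2) * (t - 1 / 2) ^ (2 * μ - 1) :=
    calc (t ^ 2 - 1) ^ (μ - 1 / 2) ≤ (2 * (t - 1 / 2) ^ 2) ^ (μ - 1 / 2) :=
          rpow_le_rpow (by nlinarith) (sq_sub_one_le_two_mul_sq_sub_half t) (by linarith)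
      _ = 2 ^ (μ - 1 / 2) * (t - 1 / 2) ^ (2 * μ - 1) := by
          rw [mul_rpow zero_le_two (by positivity), ← rpow_natCast, ← rpow_mul (by linarith)]
          ring_nf
  rw [hexp]
  calc exp (-r / 2) * exp (-(r * (t - 1 / 2))) * (t ^ 2 - 1) ^ (μ - 1 / 2)
      ≤ exp (-r / 2) * exp (-(r * (t - 1 / 2))) *
          (2 ^ (μ - 1 / 2) * (t - 1 / 2) ^ (2 * μ - 1)) := by
        gcongr
    _ = _ := by ring

theorem integral_exp_neg_mul_mul_sq_sub_one_rpow_le {μ r : ℝ} (hμ : 1 / 2 ≤ μ) (hr : 0 < r) :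
    ∫ t in Ioi 1, exp (-r * t) * (t ^ 2 - 1) ^ (μ - 1 / 2) ≤
      exp (-r / 2) * 2 ^ (μ - 1 / 2) * ((1 / r) ^ (2 * μ) * Gamma (2 * μ)) := by
  have h2μ : 0 < 2 * μ := by linarith
  set g : ℝ → ℝ := fun u => u ^ (2 * μ - 1) * exp (-(r * u))
  have hg : IntegrableOn (fun t => g (t - 1 / 2)) (Ioi 1) :=
    IntegrableOn.comp_sub_right_Ioi _ <| (integrableOn_rpow_mul_exp_neg_mul_Ioi h2μ hr).mono_set
      (Ioi_subset_Ioi (by norm_num))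
  calc ∫ t in Ioi 1, exp (-r * t) * (t ^ 2 - 1) ^ (μ - 1 / 2)
      ≤ ∫ t in Ioi 1, exp (-r / 2) * 2 ^ (μ - 1 / 2) * g (t - 1 / 2) := by
        refine integral_mono_of_nonneg ?_ (hg.const_mul _) ?_ <;>
          filter_upwards [self_mem_ae_restrict measurableSet_Ioi] with t (ht : 1 < t)
        · have : 0 ≤ t ^ 2 - 1 := by nlinarith
          positivity
        · exact exp_neg_mul_mul_sq_sub_one_rpow_le hμ ht.le
    _ = exp (-r / 2) * 2 ^ (μ - 1 / 2) * ∫ u in Ioi (1 / 2), g u := by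
        rw [integral_const_mul, setIntegral_Ioi_comp_sub_right]
        norm_num
    _ ≤ exp (-r / 2) * 2 ^ (μ - 1 / 2) * ((1 / r) ^ (2 * μ) * Gamma (2 * μ)) := by
        gcongr
        exact setIntegral_Ioi_rpow_mul_exp_neg_mul_le h2μ hr (by norm_num)

theorem besselK_le {μ r : ℝ} (hμ : 1 / 2 ≤ μ) (hr : 0 < r) :
    besselK μ r ≤ 2 ^ (-(3 / 2) : ℝ) * exp (-r / 2) * r ^ (-μ) * 2 ^ (2 * μ) * Gamma μ := by
  have hΓ : 0 < Gamma (μ + 1 / 2) := Gamma_pos_of_pos (by linarith)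
  refine (mul_le_mul_of_nonneg_left (integral_exp_neg_mul_mul_sq_sub_one_rpow_le hμ hr)
    (by positivity)).trans_eq ?_
  have h2 : (2 : ℝ) ^ (-μ) * 2 ^ (μ - 1 / 2) =
      2 ^ (-(3 / 2) : ℝ) * 2 ^ (2 * μ) * 2 ^ (1 - 2 * μ) := by
    simp only [← rpow_add two_pos]
    ring_nf
  have hr' : r ^ μ * (1 / r) ^ (2 * μ) = r ^ (-μ) := by
    rw [one_div, inv_rpow hr.le, ← rpow_neg hr.le, ← rpow_add hr]
    ring_nf
  calc √π * 2 ^ (-μ) * r ^ μ / Gamma (μ + 1 / 2) *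
        (exp (-r / 2) * 2 ^ (μ - 1 / 2) * ((1 / r) ^ (2 * μ) * Gamma (2 * μ)))
      = 2 ^ (-(3 / 2) : ℝ) * exp (-r / 2) * r ^ (-μ) * 2 ^ (2 * μ) *
          (Gamma (2 * μ) * 2 ^ (1 - 2 * μ) * √π) / Gamma (μ + 1 / 2) := by
        rw [← hr']
        linear_combination (√π * exp (-r / 2) * r ^ μ * (1 / r) ^ (2 * μ) * Gamma (2 * μ) /
          Gamma (μ + 1 / 2)) * h2
    _ = 2 ^ (-(3 / 2) : ℝ) * exp (-r / 2) * r ^ (-μ) * 2 ^ (2 * μ) * Gamma μ := by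
        rw [← Gamma_mul_Gamma_add_half]
        field_simp

/-- There is `C > 0` such that for all `μ ≥ 1/2` and `r ≥ 1`,
`K_μ(r) ≤ C · e^{-r/2} r^{-μ} 2^{2μ} Γ(μ)`. -/
theorem statement10 :
    ∃ C : ℝ, 0 < C ∧ ∀ μ r : ℝ, 1 / 2 ≤ μ → 1 ≤ r →
      besselK μ r ≤ C * Real.exp (-r / 2) * r ^ (-μ) * 2 ^ (2 * μ) * Real.Gamma μ :=
  ⟨2 ^ (-(3 / 2) : ℝ), by positivity, fun _ _ hμ hr => besselK_le hμ (by linarith)⟩
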